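/- arXiv:2409.08200 — 3 statements merged into one kernel-verified Lean document; each statement's English description precedes it below -/
import Mathlib

section
/- For preorders R ⪯ P on X, the following are equivalent: (a) R is a positive sub-preorder of P, i.e., in any loop x = x₀ ≤_R x₁ ≥_P x₂ ≤_R ⋯ ≤_R x_{2k−1} ≥_P x_{2k} = x, every descending step ≥_P is actually ≥_R; (b) the bubbles of P ∨ R^op coincide with the bubbles of R ∨ R^op (i.e., with the connected components of R), and the restrictions of R and P to each connected component of R coincide; (c) R ◁ P, i.e., R = P ∧ (P^op ∨ R). -/
open scoped Classical

/-- A preorder on `X`, bundled as a reflexive and transitive relation. -/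
structure Preo (X : Type*) where
  le : X → X → Prop
  le_refl : ∀ x, le x x
  le_trans : ∀ {x y z}, le x y → le y z → le x z

namespace Preo

variable {X : Type*}

/-- The refinement partial order `P ⪯ Q` on preorders: `x ≤_P y` implies `x ≤_Q y`. -/
def Le (P Q : Preo X) : Prop := ∀ ⦃a b⦄, P.le a b → Q.le a b

/-- The opposite preorder. -/
def op (P : Preo X) : Preo X where
  le a b := P.le b a
  le_refl x := P.le_refl x
  le_trans h h' := P.le_trans h' h

/-- The meet (pointwise intersection) of two preorders. -/
def meet (P Q : Preo X) : Preo X where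
  le a b := P.le a b ∧ Q.le a b
  le_refl x := ⟨P.le_refl x, Q.le_refl x⟩
  le_trans h h' := ⟨P.le_trans h.1 h'.1, Q.le_trans h.2 h'.2⟩

/-- The join of two preorders: zigzag chains, i.e. the reflexive-transitive closure
of the union of the two relations. -/
def join (P Q : Preo X) : Preo X where
  le a b := Relation.ReflTransGen (fun u v => P.le u v ∨ Q.le u v) a b
  le_refl _ := Relation.ReflTransGen.refl
  le_trans h h' := Relation.ReflTransGen.trans h h'

/-- The bubble relation: `a` and `b` lie in the same bubble of `P`. -/
def bubRel (P : Preo X) (a b : X) : Prop := P.le a b ∧ P.le b a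

/-- `R ◁ P` : `R` is a subdivision of `P`, i.e. `R ⪯ P` and `R = P ∧ (P^op ∨ R)`. -/
def Subdiv (R P : Preo X) : Prop := R.Le P ∧ R = P.meet (P.op.join R)

/-- `P ◀ Q` : `Q` is a contraction of `P`, i.e. `P ⪯ Q` and `Q = P ∨ (P^op ∧ Q)`. -/
def Contr (P Q : Preo X) : Prop := P.Le Q ∧ Q = P.join (P.op.meet Q)

/-- `K` is a convex subset for the preorder `P`. -/
def ConvexIn (P : Preo X) (K : Set X) : Prop :=
  ∀ ⦃x y z⦄, x ∈ K → y ∈ K → P.le x z → P.le z y → z ∈ K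

/-- `K` is connected for (the restriction to `K` of) the preorder `P`:
any two of its elements are joined by a zigzag chain of comparabilities within `K`. -/
def ConnectedIn (P : Preo X) (K : Set X) : Prop :=
  ∀ ⦃x y⦄, x ∈ K → y ∈ K →
    Relation.ReflTransGen (fun u v => u ∈ K ∧ v ∈ K ∧ (P.le u v ∨ P.le v u)) x y

/-- A total preorder. -/
def Total (P : Preo X) : Prop := ∀ a b, P.le a b ∨ P.le b a

/-- `L` is a linear extension of `P`: `L` is total, `P ⪯ L`, and the bubbles coincide. -/
def IsLinExt (P L : Preo X) : Prop :=
  L.Total ∧ P.Le L ∧ ∀ a b, P.bubRel a b ↔ L.bubRel a b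

/-- A finite down-set of the preorder `P`. -/
def IsDownset (P : Preo X) (A : Finset X) : Prop :=
  ∀ ⦃x y⦄, y ∈ A → P.le x y → x ∈ A

/-- A convex finite subset of the preorder `P`. -/
def ConvexF (P : Preo X) (C : Finset X) : Prop :=
  ∀ ⦃x y z⦄, x ∈ C → y ∈ C → P.le x z → P.le z y → z ∈ C

/-- The down-set generated by a finite set `C`. -/
noncomputable def downClosure [Fintype X] (P : Preo X) (C : Finset X) : Finset X :=
  Finset.univ.filter (fun x => ∃ y ∈ C, P.le x y)

/-- The bubble of an element `a`. -/
noncomputable def bubble [Fintype X] (P : Preo X) (a : X) : Finset X :=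
  Finset.univ.filter (fun x => P.le a x ∧ P.le x a)

/-- The set of bubbles of `P`. -/
noncomputable def bubbles [Fintype X] (P : Preo X) : Finset (Finset X) :=
  Finset.univ.image (fun a => P.bubble a)

/-- `R` is a positive sub-preorder of `P`: in any loop
`x = x₀ ≤_R x₁ ≥_P x₂ ≤_R ⋯ ≤_R x_{2k-1} ≥_P x_{2k} = x`,
every descending step `≥_P` is actually `≥_R`. -/
def PositiveSub (R P : Preo X) : Prop :=
  ∀ (k : ℕ) (x : ℕ → X), x (2 * k) = x 0 →
    (∀ i < k, R.le (x (2 * i)) (x (2 * i + 1))) →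
    (∀ i < k, P.le (x (2 * i + 2)) (x (2 * i + 1))) →
    ∀ i < k, R.le (x (2 * i + 2)) (x (2 * i + 1))

end Preo

section Submod

variable {I : Type*} [Fintype I] [DecidableEq I]

/-- A function `z : P(I) → ℝ ∪ {∞}` is submodular if
`z(S ∪ T) + z(S ∩ T) ≤ z(S) + z(T)` for all `S, T`. -/
def Submodular (z : Finset I → WithTop ℝ) : Prop :=
  ∀ S T : Finset I, z (S ∪ T) + z (S ∩ T) ≤ z S + z T

/-- The corestriction `z_{/A}` : `U ↦ z(A ∪ U) − z(A)` (meaningful when `z A ≠ ⊤`). -/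
noncomputable def coRes (z : Finset I → WithTop ℝ) (A U : Finset I) : WithTop ℝ :=
  z (A ∪ U) + ((-(z A).untopD 0 : ℝ) : WithTop ℝ)

/-- The extended generalized permutahedron of `z`:
`x_I = z(I)` and `x_A ≤ z(A)` whenever `z(A) < ∞`. -/
def EGP (z : Finset I → WithTop ℝ) : Set (I → ℝ) :=
  {x | ((∑ i, x i : ℝ) : WithTop ℝ) = z Finset.univ ∧
       ∀ A : Finset I, ((∑ i ∈ A, x i : ℝ) : WithTop ℝ) ≤ z A}

/-- `z` restricted to subsets of `C` decomposes as the product of its restrictions to `S`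
and `T`, where `C = S ⊔ T`. -/
def SplitsAlong (z : Finset I → WithTop ℝ) (C S T : Finset I) : Prop :=
  Disjoint S T ∧ S ∪ T = C ∧ ∀ E ⊆ C, z E = z (E ∩ S) + z (E ∩ T)

/-- `z` restricted to subsets of `C` is indecomposable. -/
def IndecompOn (z : Finset I → WithTop ℝ) (C : Finset I) : Prop :=
  ∀ S T : Finset I, S.Nonempty → T.Nonempty → ¬ SplitsAlong z C S T

/-- `fam` is the partition underlying a factorization of `z` into indecomposable
extended Boolean functions. -/
def IsIndecompFactorization (z : Finset I → WithTop ℝ) (fam : Finset (Finset I)) : Prop :=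
  (∀ B ∈ fam, B.Nonempty) ∧
  (∀ B ∈ fam, ∀ B' ∈ fam, B ≠ B' → Disjoint B B') ∧
  fam.sup id = Finset.univ ∧
  (∀ E : Finset I, z E = ∑ B ∈ fam, z (E ∩ B)) ∧
  ∀ B ∈ fam, IndecompOn z B

/-- A family of finite subsets of `I` forming a topology on `I`. -/
def IsTopologyFam (F : Set (Finset I)) : Prop :=
  ∅ ∈ F ∧ Finset.univ ∈ F ∧ (∀ A ∈ F, ∀ B ∈ F, A ∪ B ∈ F) ∧ ∀ A ∈ F, ∀ B ∈ F, A ∩ B ∈ F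

/-- The preorder `P` is compatible with the submodular function `z`. -/
def Compatible (z : Finset I → WithTop ℝ) (P : Preo I) : Prop :=
  (∀ A : Finset I, P.IsDownset A → z A ≠ ⊤) ∧
  ∀ A B : Finset I, P.IsDownset A → P.IsDownset B → A ⊆ B →
    ∀ C₁ C₂ : Finset I, Disjoint C₁ C₂ → C₁ ∪ C₂ = B \ A →
      (∀ x ∈ C₁, ∀ y ∈ C₂, ¬ P.le x y ∧ ¬ P.le y x) →
      ∀ U ⊆ B \ A, coRes z A U = coRes z A (U ∩ C₁) + coRes z A (U ∩ C₂)

/-- For a convex subset `C` of `P`, the function `z_C : U ↦ z(A ∪ U) − z(A)`, where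
`A = (↓C) \ C` with `↓C` the down-set generated by `C`. -/
noncomputable def zConv (z : Finset I → WithTop ℝ) (P : Preo I) (C U : Finset I) :
    WithTop ℝ :=
  coRes z (P.downClosure C \ C) U

/-- The preorder `P` conforms to the submodular function `z`: it is compatible with `z`
and every product decomposition of `z_C`, for `C` convex in `P`, comes from a
disconnected decomposition of the preorder induced on `C`. -/
def Conforms (z : Finset I → WithTop ℝ) (P : Preo I) : Prop :=
  Compatible z P ∧
  ∀ C : Finset I, P.ConvexF C →
    ∀ C₁ C₂ : Finset I, Disjoint C₁ C₂ → C₁ ∪ C₂ = C →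
      (∀ U ⊆ C, zConv z P C U = zConv z P C (U ∩ C₁) + zConv z P C (U ∩ C₂)) →
      ∀ x ∈ C₁, ∀ y ∈ C₂, ¬ P.le x y ∧ ¬ P.le y x

/-- The preorder `pre(z)` associated to `z`: `x ≤ y` iff every `A` with `z(A) < ∞`
("open set") containing `y` contains `x`. -/
def preZ (z : Finset I → WithTop ℝ) : Preo I where
  le x y := ∀ A : Finset I, z A ≠ ⊤ → y ∈ A → x ∈ A
  le_refl _ := fun _ _ h => h
  le_trans h h' := fun A hA hy => h A hA (h' A hA hy)

/-- The preorder associated (by the Alexandroff correspondence) to a family of subsets. -/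
def preOfFam (F : Set (Finset I)) : Preo I where
  le x y := ∀ A ∈ F, y ∈ A → x ∈ A
  le_refl _ := fun _ _ h => h
  le_trans h h' := fun A hA hy => h A hA (h' A hA hy)

/-- `Alin(P, z)`: the affine space cut out by `x_A = z(A)` for `A` a down-set of `P`. -/
def Alin (z : Finset I → WithTop ℝ) (P : Preo I) : Set (I → ℝ) :=
  {x | ∀ A : Finset I, P.IsDownset A → ((∑ i ∈ A, x i : ℝ) : WithTop ℝ) = z A}

/-- `AlinBu(P, z)`: the affine space cut out by `x_C = z_C(C)` for `C` a bubble of `P`. -/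
def AlinBu (z : Finset I → WithTop ℝ) (P : Preo I) : Set (I → ℝ) :=
  {x | ∀ a : I, ((∑ i ∈ P.bubble a, x i : ℝ) : WithTop ℝ) = zConv z P (P.bubble a) (P.bubble a)}

/-- `Φ_z(P)`: the (possibly empty) face of `Π(z)` cut out by the equalities `x_A = z(A)`
for `A` a down-set of `P`. -/
def Phi (z : Finset I → WithTop ℝ) (P : Preo I) : Set (I → ℝ) :=
  {x | x ∈ EGP z ∧ ∀ A : Finset I, P.IsDownset A → ((∑ i ∈ A, x i : ℝ) : WithTop ℝ) = z A}

/-- `Ψ_z(G)`: the family of sets `A` with `z(A) < ∞` on which `x_A = z(A)` for all `x ∈ G`. -/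
def PsiFam (z : Finset I → WithTop ℝ) (G : Set (I → ℝ)) : Set (Finset I) :=
  {A | z A ≠ ⊤ ∧ ∀ x ∈ G, ((∑ i ∈ A, x i : ℝ) : WithTop ℝ) = z A}

/-- `Ψ_z(G)` as a preorder. -/
def PsiPre (z : Finset I → WithTop ℝ) (G : Set (I → ℝ)) : Preo I :=
  preOfFam (PsiFam z G)

/-- `z_P = ∏_{C ∈ b(P)} z_C`: the product over all bubbles of `P`. -/
noncomputable def zP (z : Finset I → WithTop ℝ) (P : Preo I) : Finset I → WithTop ℝ :=
  fun E => ∑ C ∈ P.bubbles, zConv z P C (E ∩ C)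

/-- The restriction `z|_S` of `z` to subsets of `S`. -/
def restrictFn (z : Finset I → WithTop ℝ) (S : Finset I) :
    Finset {x : I // x ∈ S} → WithTop ℝ :=
  fun U => z (U.map (Function.Embedding.subtype fun x => x ∈ S))

/-- The corestriction `z_{/S}` of `z`, on subsets of `I ∖ S`. -/
noncomputable def coresFn (z : Finset I → WithTop ℝ) (S : Finset I) :
    Finset {x : I // x ∉ S} → WithTop ℝ :=
  fun U => z (S ∪ U.map (Function.Embedding.subtype fun x => x ∉ S)) +
    ((-(z S).untopD 0 : ℝ) : WithTop ℝ)

/-- The restriction `P|_S` of a preorder to `S`. -/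
def restrictPre (P : Preo I) (S : Finset I) : Preo {x : I // x ∈ S} where
  le a b := P.le a b
  le_refl a := P.le_refl a
  le_trans h h' := P.le_trans h h'

/-- The corestriction `P_{/S}` of a preorder, on `I ∖ S`. -/
def coresPre (P : Preo I) (S : Finset I) : Preo {x : I // x ∉ S} where
  le a b := P.le a b
  le_refl a := P.le_refl a
  le_trans h h' := P.le_trans h h'

end Submod

/-!
All three conditions are equivalent to: every edge `a ≤_P b` that lies on a cycle of `P ∨ R^op`
(that is, with `b ≤_{P ∨ R^op} a`) is an edge `a ≤_R b`. A loop as in (a) is precisely such a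
cycle read backwards in blocks `≤_R ≥_P`. Since `P^op ∨ R` is the reverse of `P ∨ R^op`, the
condition is (c) written out pointwise. For (b), it turns every `P`-step of a cycle of
`P ∨ R^op` into an `R`-step, so the bubbles of `P ∨ R^op` are connected in `R`, and on a
connected component of `R` a `P`-edge closes a cycle and is therefore an `R`-edge.
-/

namespace Preo

open Relation

variable {X : Type*}

theorem ext {P Q : Preo X} (h : ∀ a b, P.le a b ↔ Q.le a b) : P = Q := by
  obtain ⟨p, _, _⟩ := P
  obtain ⟨q, _, _⟩ := Q
  obtain rfl : p = q := funext fun a => funext fun b => propext (h a b)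
  rfl

theorem join_mono_left {P Q : Preo X} (S : Preo X) (hPQ : P.Le Q) {a b : X}
    (h : (P.join S).le a b) : (Q.join S).le a b :=
  ReflTransGen.mono (fun _ _ => Or.imp (fun h => hPQ h) id) _ _ h

theorem join_op_self_symm (R : Preo X) {a b : X} (h : (R.join R.op).le a b) :
    (R.join R.op).le b a :=
  (@ReflTransGen.stdSymm _ (fun u v => R.le u v ∨ R.op.le u v)
    ⟨fun _ _ => Or.symm⟩).symm _ _ h

theorem op_join_le_iff (P R : Preo X) {a b : X} :
    (P.op.join R).le a b ↔ (P.join R.op).le b a :=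
  reflTransGen_swap (r := fun u v => P.le u v ∨ R.op.le u v)

theorem meet_op_join_le_iff (P R : Preo X) {a b : X} :
    (P.meet (P.op.join R)).le a b ↔ P.le a b ∧ (P.join R.op).le b a :=
  and_congr_right' (op_join_le_iff P R)

/-- One block `u ≤_R w ≥_P v` of a loop as in `PositiveSub`. -/
def UpDown (R P : Preo X) (u v : X) : Prop := ∃ w, R.le u w ∧ P.le v w

theorem join_op_le_iff_reflTransGen_upDown (R P : Preo X) {u v : X} :
    (P.join R.op).le v u ↔ ReflTransGen (UpDown R P) u v := by
  constructor
  · intro h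
    refine ReflTransGen.mono ?_ _ _ (reflTransGen_swap.2 h)
    rintro x y (hP | hR)
    · exact ⟨x, R.le_refl x, hP⟩
    · exact ⟨y, hR, P.le_refl y⟩
  · intro h
    induction h with
    | refl => exact ReflTransGen.refl
    | tail _ hstep ih =>
      obtain ⟨w, hR, hP⟩ := hstep
      exact ReflTransGen.head (Or.inl hP) (ReflTransGen.head (Or.inr hR) ih)

def IsZigzag (R P : Preo X) (k : ℕ) (x : ℕ → X) : Prop :=
  (∀ i < k, R.le (x (2 * i)) (x (2 * i + 1))) ∧ ∀ i < k, P.le (x (2 * i + 2)) (x (2 * i + 1))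

theorem positiveSub_iff (R P : Preo X) :
    R.PositiveSub P ↔ ∀ k x, x (2 * k) = x 0 → IsZigzag R P k x →
      ∀ i < k, R.le (x (2 * i + 2)) (x (2 * i + 1)) :=
  forall₂_congr fun _ _ => imp_congr_right fun _ => and_imp.symm

def consZigzag (u w : X) (x : ℕ → X) : ℕ → X
  | 0 => u
  | 1 => w
  | i + 2 => x i

theorem IsZigzag.cons {R P : Preo X} {k : ℕ} {x : ℕ → X} (hx : IsZigzag R P k x) {u w : X}
    (hu : R.le u w) (hw : P.le (x 0) w) : IsZigzag R P (k + 1) (consZigzag u w x) := by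
  constructor
  · rintro (_ | i) hi
    · exact hu
    · exact hx.1 i (by omega)
  · rintro (_ | i) hi
    · exact hw
    · exact hx.2 i (by omega)

theorem exists_isZigzag_of_reflTransGen {R P : Preo X} {u v : X}
    (h : ReflTransGen (UpDown R P) u v) :
    ∃ k x, x 0 = u ∧ x (2 * k) = v ∧ IsZigzag R P k x := by
  induction h using ReflTransGen.head_induction_on with
  | refl => exact ⟨0, fun _ => v, rfl, rfl, fun _ h => (Nat.not_lt_zero _ h).elim,
      fun _ h => (Nat.not_lt_zero _ h).elim⟩
  | head hstep _ ih =>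
    obtain ⟨w, hR, hP⟩ := hstep
    obtain ⟨k, x, rfl, hxk, hx⟩ := ih
    exact ⟨k + 1, consZigzag _ w x, rfl, hxk, hx.cons hR hP⟩

theorem IsZigzag.reflTransGen_upDown {R P : Preo X} {k : ℕ} {x : ℕ → X}
    (hx : IsZigzag R P k x) {j l : ℕ} (hjl : j ≤ l) (hlk : l ≤ k) :
    ReflTransGen (UpDown R P) (x (2 * j)) (x (2 * l)) := by
  induction l, hjl using Nat.le_induction with
  | base => exact ReflTransGen.refl
  | succ l _ ih =>
    exact (ih (by omega)).tail ⟨_, hx.1 l (by omega), hx.2 l (by omega)⟩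

def CycleClosed (R P : Preo X) : Prop :=
  ∀ ⦃a b⦄, P.le a b → (P.join R.op).le b a → R.le a b

theorem cycleClosed_of_positiveSub {R P : Preo X} (hpos : R.PositiveSub P) :
    R.CycleClosed P := by
  intro a b hab hba
  obtain ⟨k, x, rfl, hxk, hx⟩ :=
    exists_isZigzag_of_reflTransGen ((join_op_le_iff_reflTransGen_upDown R P).1 hba)
  -- close the path from `x 0` to `b` into a loop at `b` whose first block is `b ≤_R b ≥_P x 0`
  exact (positiveSub_iff R P).1 hpos (k + 1) (consZigzag b b x) hxk
    (hx.cons (R.le_refl b) hab) 0 (Nat.succ_pos k)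

theorem positiveSub_of_cycleClosed {R P : Preo X} (hcyc : R.CycleClosed P) :
    R.PositiveSub P := by
  refine (positiveSub_iff R P).2 fun k x hloop hx i hi => hcyc (hx.2 i hi) ?_
  refine (join_op_le_iff_reflTransGen_upDown R P).2 ?_
  have hback : ReflTransGen (UpDown R P) (x (2 * (i + 1))) (x (2 * 0)) := by
    have h := hx.reflTransGen_upDown (Nat.succ_le_of_lt hi) le_rfl
    rwa [hloop] at h
  exact (hback.trans (hx.reflTransGen_upDown (Nat.zero_le i) hi.le)).tail
    ⟨_, hx.1 i hi, P.le_refl _⟩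

theorem positiveSub_iff_cycleClosed (R P : Preo X) : R.PositiveSub P ↔ R.CycleClosed P :=
  ⟨cycleClosed_of_positiveSub, positiveSub_of_cycleClosed⟩

theorem CycleClosed.join_le_of_bubRel {R P : Preo X} (hcyc : R.CycleClosed P) {a b : X}
    (hab : (P.join R.op).le a b) (hba : (P.join R.op).le b a) : (R.join R.op).le a b := by
  induction hab with
  | refl => exact ReflTransGen.refl
  | @tail c d hac hcd ih =>
    refine (ih (ReflTransGen.head hcd hba)).tail (hcd.imp_left fun hP => ?_)
    exact hcyc hP (hba.trans hac)

theorem CycleClosed.bubRel_iff {R P : Preo X} (hRP : R.Le P) (hcyc : R.CycleClosed P)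
    (a b : X) : (P.join R.op).bubRel a b ↔ (R.join R.op).bubRel a b :=
  ⟨fun ⟨hab, hba⟩ => ⟨hcyc.join_le_of_bubRel hab hba, hcyc.join_le_of_bubRel hba hab⟩,
    fun ⟨hab, hba⟩ => ⟨join_mono_left _ hRP hab, join_mono_left _ hRP hba⟩⟩

theorem CycleClosed.le_iff_of_join_le {R P : Preo X} (hRP : R.Le P) (hcyc : R.CycleClosed P)
    {a b : X} (h : (R.join R.op).le a b) : R.le a b ↔ P.le a b :=
  ⟨fun hR => hRP hR, fun hP => hcyc hP (join_mono_left _ hRP (join_op_self_symm R h))⟩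

theorem cycleClosed_of_bubRel_iff_of_le_iff {R P : Preo X}
    (hbub : ∀ a b : X, (P.join R.op).bubRel a b ↔ (R.join R.op).bubRel a b)
    (hle : ∀ a b : X, (R.join R.op).le a b → (R.le a b ↔ P.le a b)) : R.CycleClosed P :=
  fun a b hab hba =>
    (hle a b ((hbub a b).1 ⟨ReflTransGen.single (Or.inl hab), hba⟩).1).2 hab

theorem subdiv_iff_cycleClosed {R P : Preo X} (hRP : R.Le P) : R.Subdiv P ↔ R.CycleClosed P := by
  constructor
  · rintro ⟨-, heq⟩ a b hab hba
    rw [heq]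
    exact (meet_op_join_le_iff P R).2 ⟨hab, hba⟩
  · intro hcyc
    refine ⟨hRP, ext fun a b => ?_⟩
    rw [meet_op_join_le_iff]
    exact ⟨fun h => ⟨hRP h, ReflTransGen.single (Or.inr h)⟩, fun h => hcyc h.1 h.2⟩

end Preo

/-- For preorders `R ⪯ P` on `X`, the following are equivalent:
(a) `R` is a positive sub-preorder of `P` (in every loop the descending `≥_P` steps are
`≥_R`); (b) the bubbles of `P ∨ R^op` coincide with the bubbles of `R ∨ R^op` and the
restrictions of `R` and `P` to the connected components of `R` coincide; (c) `R ◁ P`. -/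
theorem positive_admissible_subdivision_equiv
    {X : Type*} (R P : Preo X) (hRP : R.Le P) :
    (Preo.PositiveSub R P ↔
      ((∀ a b : X, (P.join R.op).bubRel a b ↔ (R.join R.op).bubRel a b) ∧
       ∀ a b : X, (R.join R.op).le a b → (R.le a b ↔ P.le a b))) ∧
    (Preo.PositiveSub R P ↔ Preo.Subdiv R P) := by
  rw [Preo.positiveSub_iff_cycleClosed, Preo.subdiv_iff_cycleClosed hRP]
  exact ⟨⟨fun hcyc => ⟨hcyc.bubRel_iff hRP, fun _ _ => hcyc.le_iff_of_join_le hRP⟩,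
    fun h => Preo.cycleClosed_of_bubRel_iff_of_le_iff h.1 h.2⟩, Iff.rfl⟩
end

section
/- Suppose the preorder P is compatible with the submodular function z on I. If B ⊇ A and B' ⊇ A' are down-sets of P with B ∖ A = B' ∖ A' = C, then z_{B/A} = z_{B'/A'}; that is, the corestricted function depends only on the convex set C and not on the particular way of writing C as a difference of down-sets. -/
open scoped Classical

/-
The pair `A ∩ A' ⊆ B ∩ B' = (A ∩ A') ∪ C` is again a difference of down-sets equal to `C`, lying
below both given pairs, so it suffices to compare `A ⊆ A ∪ C` with a pair `A₀ ⊆ A₀ ∪ C`, `A₀ ⊆ A`.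
Then `(A ∪ C) ∖ A₀` is the disjoint union of `A ∖ A₀` and `C` with no comparabilities between the
two parts, and compatibility splits
`z(A ∪ U) − z(A₀) = (z(A) − z(A₀)) + (z(A₀ ∪ U) − z(A₀))`, i.e. `z_{/A}(U) = z_{/A₀}(U)`.
-/

theorem Preo.IsDownset.inter {X : Type*} [DecidableEq X] {P : Preo X} {A B : Finset X}
    (hA : P.IsDownset A) (hB : P.IsDownset B) : P.IsDownset (A ∩ B) := fun _ _ hy hxy =>
  Finset.mem_inter.mpr ⟨hA (Finset.mem_inter.mp hy).1 hxy, hB (Finset.mem_inter.mp hy).2 hxy⟩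

theorem WithTop.add_coe_sub_eq_of_add_coe_eq_coe_add {x y : WithTop ℝ} {p q : ℝ}
    (h : x + p = q + y) : x + ((p - q : ℝ) : WithTop ℝ) = y := by
  rw [sub_eq_add_neg, WithTop.coe_add, ← add_assoc, h, add_comm (q : WithTop ℝ), add_assoc,
    ← WithTop.coe_add, add_neg_cancel, WithTop.coe_zero, add_zero]

section Corestriction

variable {I : Type*} [DecidableEq I] {z : Finset I → WithTop ℝ}

theorem coRes_of_eq_coe {A : Finset I} {a : ℝ} (ha : z A = a) (U : Finset I) :
    coRes z A U = z (A ∪ U) + ((-a : ℝ) : WithTop ℝ) := by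
  rw [coRes, ha, WithTop.untopD_coe]

theorem inter_union_sdiff_eq_inter_of_sdiff_eq {A B A' B' : Finset I} (hAB : A ⊆ B)
    (hAB' : A' ⊆ B') (hC : B \ A = B' \ A') : A ∩ A' ∪ B \ A = B ∩ B' := by
  ext x
  have hx := Finset.ext_iff.mp hC x
  grind

theorem Preo.not_le_and_not_ge_of_mem_sdiff {P : Preo I} {A₀ A C : Finset I}
    (hA : P.IsDownset A) (hB₀ : P.IsDownset (A₀ ∪ C)) (hAC : Disjoint A C) :
    ∀ x ∈ A \ A₀, ∀ y ∈ C, ¬ P.le x y ∧ ¬ P.le y x := by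
  intro x hx y hy
  obtain ⟨hxA, hxA₀⟩ := Finset.mem_sdiff.mp hx
  refine ⟨fun hxy => ?_, fun hyx => Finset.disjoint_left.mp hAC (hA hxA hyx) hy⟩
  rcases Finset.mem_union.mp (hB₀ (Finset.mem_union_right A₀ hy) hxy) with hx₀ | hxC
  · exact hxA₀ hx₀
  · exact Finset.disjoint_left.mp hAC hxA hxC

theorem coRes_eq_of_downset_subset {P : Preo I} (hcomp : Compatible z P) {A₀ A C : Finset I}
    (hA₀ : P.IsDownset A₀) (hA : P.IsDownset A) (hA₀A : A₀ ⊆ A)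
    (hB₀ : P.IsDownset (A₀ ∪ C)) (hB : P.IsDownset (A ∪ C)) (hAC : Disjoint A C)
    {U : Finset I} (hU : U ⊆ C) : coRes z A U = coRes z A₀ U := by
  set D := A \ A₀
  have hDC : Disjoint D C := hAC.mono_left Finset.sdiff_subset
  have hsplit : D ∪ C = (A ∪ C) \ A₀ := by
    rw [Finset.union_sdiff_distrib,
      Finset.sdiff_eq_self_of_disjoint (hAC.mono_left hA₀A).symm]
  have hDU : (D ∪ U) ∩ C = U := by
    rw [Finset.union_inter_distrib_right, Finset.disjoint_iff_inter_eq_empty.mp hDC,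
      Finset.empty_union, Finset.inter_eq_left.mpr hU]
  have hA₀D : A₀ ∪ D = A := Finset.union_sdiff_of_subset hA₀A
  have key := hcomp.2 A₀ (A ∪ C) hA₀ hB (hA₀A.trans Finset.subset_union_left) D C hDC hsplit
    (Preo.not_le_and_not_ge_of_mem_sdiff hA hB₀ hAC) (D ∪ U)
    (hsplit ▸ Finset.union_subset_union_right hU)
  obtain ⟨a₀, ha₀⟩ := WithTop.ne_top_iff_exists.mp (hcomp.1 A₀ hA₀)
  obtain ⟨a, ha⟩ := WithTop.ne_top_iff_exists.mp (hcomp.1 A hA)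
  rw [Finset.union_inter_cancel_left, hDU] at key
  simp only [coRes_of_eq_coe ha₀.symm, coRes_of_eq_coe ha.symm, hA₀D, ← Finset.union_assoc,
    ← ha, ← WithTop.coe_add] at key ⊢
  convert WithTop.add_coe_sub_eq_of_add_coe_eq_coe_add key using 3
  ring

end Corestriction

theorem corestriction_welldefined_general
    {I : Type*} [DecidableEq I]
    (z : Finset I → WithTop ℝ)
    (P : Preo I) (hcomp : Compatible z P)
    (A B A' B' : Finset I)
    (hA : P.IsDownset A) (hB : P.IsDownset B) (hA' : P.IsDownset A') (hB' : P.IsDownset B')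
    (hAB : A ⊆ B) (hAB' : A' ⊆ B') (hC : B \ A = B' \ A') :
    ∀ U ⊆ B \ A, coRes z A U = coRes z A' U := by
  intro U hU
  have hAC : A ∪ B \ A = B := Finset.union_sdiff_of_subset hAB
  have hA'C : A' ∪ B \ A = B' := by rw [hC, Finset.union_sdiff_of_subset hAB']
  have hB₀ : P.IsDownset (A ∩ A' ∪ B \ A) := by
    rw [inter_union_sdiff_eq_inter_of_sdiff_eq hAB hAB' hC]
    exact hB.inter hB'
  rw [coRes_eq_of_downset_subset hcomp (hA.inter hA') hA Finset.inter_subset_left hB₀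
      (hAC.symm ▸ hB) Finset.disjoint_sdiff hU,
    coRes_eq_of_downset_subset hcomp (hA.inter hA') hA' Finset.inter_subset_right hB₀
      (hA'C.symm ▸ hB') (hC ▸ Finset.disjoint_sdiff) hU]

/-- If the preorder `P` is compatible with the submodular function `z`,
and `B ⊇ A`, `B' ⊇ A'` are down-sets of `P` with `B ∖ A = B' ∖ A' = C`, then
`z_{B/A} = z_{B'/A'}` as functions on subsets of `C`. -/
theorem corestriction_welldefined
    {I : Type*} [Fintype I] [DecidableEq I]
    (z : Finset I → WithTop ℝ) (hz0 : z ∅ = 0) (hzI : z Finset.univ ≠ ⊤)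
    (hsub : Submodular z) (P : Preo I) (hcomp : Compatible z P)
    (A B A' B' : Finset I)
    (hA : P.IsDownset A) (hB : P.IsDownset B) (hA' : P.IsDownset A') (hB' : P.IsDownset B')
    (hAB : A ⊆ B) (hAB' : A' ⊆ B') (hC : B \ A = B' \ A') :
    ∀ U ⊆ B \ A, coRes z A U = coRes z A' U :=
  corestriction_welldefined_general z P hcomp A B A' B' hA hB hA' hB' hAB hAB' hC
end

section
/- Let the preorder P be compatible with the submodular function z on I, and let L be a linear extension of P. Then Alin(P, z) = AlinBu(P, z) = Alin(L, z). -/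
open scoped Classical

/-!
Compatibility makes `z(B) - z(A)`, for down-sets `A ⊆ B`, depend only on `B \ A`: comparing
two such pairs with the same difference `C` through the pair `(A ∩ A', B)`, whose difference
splits into the mutually incomparable parts `A \ A'` and `C`, gives the same value. Hence
`z_C(C)` is such a difference for every bubble `C`. Each bubble is the difference of two
down-sets of `L`, which are down-sets of `P`, so `Alin(P) ⊆ Alin(L) ⊆ AlinBu(P)`. Conversely,
removing from a down-set of `P` the bubble of a maximal element leaves a down-set, so
`AlinBu(P) ⊆ Alin(P)` by induction.
-/

lemma WithTop.coe_untopD_of_ne_top {α : Type*} {w : WithTop α} (d : α) (h : w ≠ ⊤) :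
    ((w.untopD d : α) : WithTop α) = w := by
  lift w to α using h
  rfl

lemma WithTop.coe_eq_iff_eq_untopD {α : Type*} {r : α} {w : WithTop α} (d : α) (h : w ≠ ⊤) :
    (r : WithTop α) = w ↔ r = w.untopD d := by
  lift w to α using h
  rw [WithTop.coe_inj, WithTop.untopD_coe]

namespace Preo

variable {X : Type*}

lemma exists_maximal_mem (P : Preo X) {A : Finset X} (hA : A.Nonempty) :
    ∃ a ∈ A, ∀ b ∈ A, P.le a b → P.le b a := by
  let _ : Preorder X := { le := P.le, le_refl := P.le_refl, le_trans := fun _ _ _ => P.le_trans }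
  obtain ⟨a, ha⟩ := A.exists_maximal hA
  exact ⟨a, ha.prop, fun b hb => ha.le_of_ge hb⟩

lemma IsDownset.of_le {P L : Preo X} (h : P.Le L) {A : Finset X} (hA : L.IsDownset A) :
    P.IsDownset A :=
  fun _ _ hy hle => hA hy (h hle)

variable [Fintype X]

lemma mem_bubble {P : Preo X} {a x : X} : x ∈ P.bubble a ↔ P.le a x ∧ P.le x a := by
  simp [bubble]

lemma bubble_eq_of_bubRel_iff {P L : Preo X} (h : ∀ a b, P.bubRel a b ↔ L.bubRel a b) (a : X) :
    P.bubble a = L.bubble a := by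
  ext x
  rw [mem_bubble, mem_bubble]
  exact h a x

lemma convexF_bubble (P : Preo X) (a : X) : P.ConvexF (P.bubble a) := by
  intro x y u hx hy hxu huy
  exact mem_bubble.2 ⟨P.le_trans (mem_bubble.1 hx).1 hxu, P.le_trans huy (mem_bubble.1 hy).2⟩

lemma subset_downClosure (P : Preo X) (C : Finset X) : C ⊆ P.downClosure C :=
  fun x hx => by simpa [downClosure] using ⟨x, hx, P.le_refl x⟩

lemma isDownset_downClosure (P : Preo X) (C : Finset X) : P.IsDownset (P.downClosure C) := by
  intro x y hy hxy
  simp only [downClosure, Finset.mem_filter, Finset.mem_univ, true_and] at hy ⊢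
  obtain ⟨c, hc, hyc⟩ := hy
  exact ⟨c, hc, P.le_trans hxy hyc⟩

lemma ConvexF.isDownset_downClosure_sdiff [DecidableEq X] {P : Preo X} {C : Finset X}
    (hC : P.ConvexF C) : P.IsDownset (P.downClosure C \ C) := by
  intro x y hy hxy
  obtain ⟨hyC', hyC⟩ := Finset.mem_sdiff.1 hy
  refine Finset.mem_sdiff.2 ⟨P.isDownset_downClosure C hyC' hxy, fun hxC => hyC ?_⟩
  simp only [downClosure, Finset.mem_filter, Finset.mem_univ, true_and] at hyC'
  obtain ⟨c, hc, hyc⟩ := hyC'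
  exact hC hxC hc hxy hyc

end Preo

section Compatible

variable {I : Type*} [DecidableEq I] {z : Finset I → WithTop ℝ} {P : Preo I}

lemma coRes_eq_coe_sub {A U : Finset I} (h : z (A ∪ U) ≠ ⊤) :
    coRes z A U = (((z (A ∪ U)).untopD 0 - (z A).untopD 0 : ℝ) : WithTop ℝ) := by
  rw [coRes, sub_eq_add_neg, WithTop.coe_add, WithTop.coe_untopD_of_ne_top 0 h]

lemma Compatible.untopD_add_eq (hcomp : Compatible z P) {D B C₁ C₂ : Finset I}
    (hD : P.IsDownset D) (hB : P.IsDownset B) (hDB : D ⊆ B) (hdisj : Disjoint C₁ C₂)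
    (hunion : C₁ ∪ C₂ = B \ D)
    (hinc : ∀ x ∈ C₁, ∀ y ∈ C₂, ¬ P.le x y ∧ ¬ P.le y x) :
    (z B).untopD 0 + (z D).untopD 0 = (z (D ∪ C₁)).untopD 0 + (z (D ∪ C₂)).untopD 0 := by
  have key := hcomp.2 D B hD hB hDB C₁ C₂ hdisj hunion hinc (B \ D) subset_rfl
  rw [← hunion, Finset.union_inter_cancel_left, Finset.union_inter_cancel_right, hunion] at key
  have hBD : D ∪ B \ D = B := Finset.union_sdiff_of_subset hDB
  have hfin : coRes z D C₁ + coRes z D C₂ ≠ ⊤ := by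
    rw [← key, coRes, hBD]
    exact WithTop.add_ne_top.2 ⟨hcomp.1 B hB, WithTop.coe_ne_top⟩
  obtain ⟨h₁, h₂⟩ := WithTop.add_ne_top.1 hfin
  rw [coRes, WithTop.add_ne_top] at h₁ h₂
  rw [coRes_eq_coe_sub (by rw [hBD]; exact hcomp.1 B hB), hBD, coRes_eq_coe_sub h₁.1,
    coRes_eq_coe_sub h₂.1, ← WithTop.coe_add, WithTop.coe_inj] at key
  linarith

lemma Compatible.untopD_add_inter_eq (hcomp : Compatible z P) {A B A' B' : Finset I}
    (hA : P.IsDownset A) (hB : P.IsDownset B) (hA' : P.IsDownset A') (hB' : P.IsDownset B')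
    (hAB : A ⊆ B) (hdiff : B \ A = B' \ A') :
    (z B).untopD 0 + (z (A ∩ A')).untopD 0 =
      (z A).untopD 0 + (z (A ∩ A' ∪ (B \ A))).untopD 0 := by
  have hD : P.IsDownset (A ∩ A') := fun x y hy hxy =>
    Finset.mem_inter.2 ⟨hA (Finset.mem_inter.1 hy).1 hxy, hA' (Finset.mem_inter.1 hy).2 hxy⟩
  have hinc : ∀ x ∈ A \ A', ∀ y ∈ B \ A, ¬ P.le x y ∧ ¬ P.le y x := by
    intro x hx y hy
    rw [Finset.mem_sdiff] at hx
    refine ⟨fun hxy => ?_, fun hyx => (Finset.mem_sdiff.1 hy).2 (hA hx.1 hyx)⟩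
    have hxB' : x ∈ B' \ A' :=
      Finset.mem_sdiff.2 ⟨hB' (Finset.mem_sdiff.1 (hdiff ▸ hy)).1 hxy, hx.2⟩
    exact (Finset.mem_sdiff.1 (hdiff ▸ hxB')).2 hx.1
  have h := hcomp.untopD_add_eq hD hB (Finset.inter_subset_left.trans hAB)
    (Finset.disjoint_sdiff.mono_left Finset.sdiff_subset) (by grind) hinc
  rwa [show A ∩ A' ∪ A \ A' = A from sup_inf_sdiff A A'] at h

lemma Compatible.untopD_sub_eq (hcomp : Compatible z P) {A B A' B' : Finset I}
    (hA : P.IsDownset A) (hB : P.IsDownset B) (hA' : P.IsDownset A') (hB' : P.IsDownset B')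
    (hAB : A ⊆ B) (hA'B' : A' ⊆ B') (hdiff : B \ A = B' \ A') :
    (z B).untopD 0 - (z A).untopD 0 = (z B').untopD 0 - (z A').untopD 0 := by
  have h := hcomp.untopD_add_inter_eq hA hB hA' hB' hAB hdiff
  have h' := hcomp.untopD_add_inter_eq hA' hB' hA hB hA'B' hdiff.symm
  rw [Finset.inter_comm, ← hdiff] at h'
  linarith

lemma Compatible.zConv_eq [Fintype I] (hcomp : Compatible z P) {C A B : Finset I}
    (hC : P.ConvexF C) (hA : P.IsDownset A) (hB : P.IsDownset B) (hAB : A ⊆ B)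
    (hdiff : B \ A = C) :
    zConv z P C C = (((z B).untopD 0 - (z A).untopD 0 : ℝ) : WithTop ℝ) := by
  have hCsub := P.subset_downClosure C
  have hfin : z (P.downClosure C \ C ∪ C) ≠ ⊤ := by
    rw [Finset.sdiff_union_of_subset hCsub]
    exact hcomp.1 _ (P.isDownset_downClosure C)
  rw [zConv, coRes_eq_coe_sub hfin, Finset.sdiff_union_of_subset hCsub,
    hcomp.untopD_sub_eq hC.isDownset_downClosure_sdiff (P.isDownset_downClosure C) hA hB
      Finset.sdiff_subset hAB (by rw [Finset.sdiff_sdiff_eq_self hCsub, hdiff])]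

end Compatible

section Alin

variable {I : Type*} [DecidableEq I] {z : Finset I → WithTop ℝ} {P : Preo I}

lemma Compatible.mem_alin_iff (hcomp : Compatible z P) {x : I → ℝ} :
    x ∈ Alin z P ↔ ∀ A, P.IsDownset A → ∑ i ∈ A, x i = (z A).untopD 0 :=
  forall₂_congr fun A hA => WithTop.coe_eq_iff_eq_untopD 0 (hcomp.1 A hA)

omit [DecidableEq I] in
lemma alin_mono {L : Preo I} (h : P.Le L) : Alin z P ⊆ Alin z L :=
  fun _ hx A hA => hx A (hA.of_le h)

lemma alin_subset_alinBu [Fintype I] (hcomp : Compatible z P) {L : Preo I} (hPL : P.Le L)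
    (hbub : ∀ a b, P.bubRel a b ↔ L.bubRel a b) : Alin z L ⊆ AlinBu z P := by
  intro x hx a
  have hLC : L.ConvexF (P.bubble a) := P.bubble_eq_of_bubRel_iff hbub a ▸ L.convexF_bubble a
  set C := P.bubble a
  set B := L.downClosure C
  have hB : L.IsDownset B := L.isDownset_downClosure C
  have hA : L.IsDownset (B \ C) := hLC.isDownset_downClosure_sdiff
  have hdiff : B \ (B \ C) = C := Finset.sdiff_sdiff_eq_self (L.subset_downClosure C)
  have hsum := Finset.sum_sdiff (f := x) (Finset.sdiff_subset : B \ C ⊆ B)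
  rw [hdiff] at hsum
  have hxB := (WithTop.coe_eq_iff_eq_untopD 0 (hcomp.1 _ (hB.of_le hPL))).1 (hx _ hB)
  have hxA := (WithTop.coe_eq_iff_eq_untopD 0 (hcomp.1 _ (hA.of_le hPL))).1 (hx _ hA)
  rw [hcomp.zConv_eq (P.convexF_bubble a) (hA.of_le hPL) (hB.of_le hPL) Finset.sdiff_subset
    hdiff, WithTop.coe_inj]
  linarith

lemma alinBu_subset_alin [Fintype I] (hz0 : z ∅ = 0) (hcomp : Compatible z P) :
    AlinBu z P ⊆ Alin z P := by
  intro x hx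
  rw [hcomp.mem_alin_iff]
  intro A
  induction A using Finset.strongInduction with
  | _ A ih =>
    intro hA
    rcases A.eq_empty_or_nonempty with rfl | hne
    · simp [hz0]
    obtain ⟨a, haA, hmax⟩ := P.exists_maximal_mem hne
    have hCA : P.bubble a ⊆ A := fun c hc => hA haA (Preo.mem_bubble.1 hc).2
    have hA' : P.IsDownset (A \ P.bubble a) := by
      intro u v hv huv
      obtain ⟨hvA, hvC⟩ := Finset.mem_sdiff.1 hv
      refine Finset.mem_sdiff.2 ⟨hA hvA huv, fun huC => hvC ?_⟩
      have hav := P.le_trans (Preo.mem_bubble.1 huC).1 huv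
      exact Preo.mem_bubble.2 ⟨hav, hmax v hvA hav⟩
    have hC := hx a
    rw [hcomp.zConv_eq (P.convexF_bubble a) hA' hA Finset.sdiff_subset
      (Finset.sdiff_sdiff_eq_self hCA), WithTop.coe_inj] at hC
    rw [← Finset.sum_sdiff hCA, hC,
      ih _ (Finset.sdiff_ssubset hCA ⟨a, Preo.mem_bubble.2 ⟨P.le_refl a, P.le_refl a⟩⟩) hA']
    ring

end Alin

theorem alin_alinbu_alinL_general
    {I : Type*} [Fintype I] [DecidableEq I]
    (z : Finset I → WithTop ℝ) (hz0 : z ∅ = 0)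
    (P L : Preo I) (hcomp : Compatible z P)
    (hL : Preo.IsLinExt P L) :
    Alin z P = AlinBu z P ∧ AlinBu z P = Alin z L := by
  have hPL : Alin z P ⊆ Alin z L := alin_mono hL.2.1
  have hLB : Alin z L ⊆ AlinBu z P := alin_subset_alinBu hcomp hL.2.1 hL.2.2
  have hBP : AlinBu z P ⊆ Alin z P := alinBu_subset_alin hz0 hcomp
  exact ⟨(hPL.trans hLB).antisymm hBP, hLB.antisymm' (hBP.trans hPL)⟩

/-- If the preorder `P` is compatible with the submodular function `z`
and `L` is a linear extension of `P`, then `Alin(P, z) = AlinBu(P, z) = Alin(L, z)`. -/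
theorem alin_alinbu_alinL
    {I : Type*} [Fintype I] [DecidableEq I]
    (z : Finset I → WithTop ℝ) (hz0 : z ∅ = 0) (hzI : z Finset.univ ≠ ⊤)
    (hsub : Submodular z) (P L : Preo I) (hcomp : Compatible z P)
    (hL : Preo.IsLinExt P L) :
    Alin z P = AlinBu z P ∧ AlinBu z P = Alin z L :=
  alin_alinbu_alinL_general z hz0 P L hcomp hL
end
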